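/- arXiv:0709.3788 — 8 statements merged into one kernel-verified Lean document; each statement's English description precedes it below -/
import Mathlib

section
/- One has ∫_{−π}^{0} ( sin²v / v² − sin(2v)/v + 1 ) dv = π. (Equivalently, ∫_{−π}^{0} ( sin²v / v² − sin(2v)/v ) dv = 0.) This expresses, after the substitution x = 1 − v·cot v + log(v/sin v), that the function g_∞(x) = (1/π)·Im(1/W_{−1}(−e^{−1+x})) is a probability density on [0, ∞). -/
/-!
The integrand is the derivative of `v ↦ v - sin² v / v` away from `0`. This antiderivative
extends continuously through `0` (there `sin² v / v = sin v · sinc v`), vanishes at `0` and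
equals `-π` at `-π`. Integrability comes for free because the integrand is the sum of squares
`(sin v / v - cos v)² + sin² v`.
-/

open Real Set intervalIntegral

lemma sin_sq_div_self_eq_sin_mul_sinc (v : ℝ) : sin v ^ 2 / v = sin v * sinc v := by
  rcases eq_or_ne v 0 with rfl | hv
  · simp
  · rw [sinc_of_ne_zero hv]
    ring

lemma continuous_sin_sq_div_self : Continuous fun v : ℝ => sin v ^ 2 / v := by
  simp only [sin_sq_div_self_eq_sin_mul_sinc]
  exact continuous_sin.mul continuous_sinc

lemma sin_sq_div_sq_sub_sin_two_mul_div_add_one (v : ℝ) :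
    sin v ^ 2 / v ^ 2 - sin (2 * v) / v + 1 = (sin v / v - cos v) ^ 2 + sin v ^ 2 := by
  rw [sin_two_mul]
  linear_combination -sin_sq_add_cos_sq v

lemma hasDerivAt_self_sub_sin_sq_div_self {v : ℝ} (hv : v ≠ 0) :
    HasDerivAt (fun w => w - sin w ^ 2 / w) (sin v ^ 2 / v ^ 2 - sin (2 * v) / v + 1) v := by
  have hsq : HasDerivAt (fun w => sin w ^ 2) (2 * sin v * cos v) v := by
    simpa [mul_comm, mul_assoc] using (hasDerivAt_sin v).fun_pow 2
  refine ((hasDerivAt_id' v).fun_sub (hsq.div (hasDerivAt_id' v) hv)).congr_deriv ?_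
  rw [sin_two_mul]
  field_simp
  ring

/-- The integral identity `∫_{−π}^{0} ( sin²v/v² − sin(2v)/v + 1 ) dv = π`, which expresses
(after the substitution `x = 1 − v·cot v + log(v/sin v)`) that the density
`g_∞(x) = (1/π)·Im(1/W₋₁(−e^{−1+x}))` of the final jump time is a probability density on
`[0, ∞)`. -/
theorem integral_density_substituted_eq_pi :
    ∫ v in (-Real.pi)..0,
      (Real.sin v ^ 2 / v ^ 2 - Real.sin (2 * v) / v + 1) = Real.pi := by
  have hle : -π ≤ 0 := by linarith [pi_pos]
  have hcont : ContinuousOn (fun w => w - sin w ^ 2 / w) (Icc (-π) 0) :=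
    (continuous_id.sub continuous_sin_sq_div_self).continuousOn
  have hderiv : ∀ v ∈ Ioo (-π) 0,
      HasDerivAt (fun w => w - sin w ^ 2 / w) (sin v ^ 2 / v ^ 2 - sin (2 * v) / v + 1) v :=
    fun v hv => hasDerivAt_self_sub_sin_sq_div_self hv.2.ne
  have hint : IntervalIntegrable (fun v => sin v ^ 2 / v ^ 2 - sin (2 * v) / v + 1)
      MeasureTheory.volume (-π) 0 := by
    refine intervalIntegrable_deriv_of_nonneg (by rwa [uIcc_of_le hle])
      (by rwa [min_eq_left hle, max_eq_right hle]) fun v _ => ?_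
    rw [sin_sq_div_sq_sub_sin_two_mul_div_add_one]
    positivity
  rw [integral_eq_sub_of_hasDerivAt_of_le hle hcont hderiv hint]
  simp
end

section
/- The function v ↦ (1 − v·(cos v / sin v) + log(v / sin v)) · ( sin²v / v² − sin(2v)/v + 1 ) is nonnegative on (−π, 0) and is not Lebesgue integrable there: its integral over (−π, 0) diverges to +∞. This expresses, after the substitution x = 1 − v·cot v + log(v/sin v), that the density g_∞ of the final jump time has infinite mean: ∫_0^∞ x·g_∞(x) dx = ∞. -/
/-!
The integrand is `x(v) · w(v)` with `x(v) = 1 - v cot v + log (v / sin v)` and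
`w(v) = (sin v / v - cos v)² + sin² v`. Both factors are nonnegative on `(-π, 0)`: the first
because `v cot v ≤ 1` and `|sin v| ≤ |v|`, the second being a sum of squares. Near `-π` we
have `cos v ≤ 0`, so `w(v) ≥ 1`, while `-v cot v ≥ 1 / (-sin v) ≥ 1 / (v + π)`. Hence the
integrand dominates `(v + π)⁻¹`, which is not integrable at `-π`.
-/

open Real MeasureTheory Set

/-- The abscissa `x(v)` of the substitution. -/
noncomputable def substAbscissa (v : ℝ) : ℝ := 1 - v * (cos v / sin v) + log (v / sin v)

/-- `-π · g_∞(x(v)) · x'(v)`: the sign accounts for `x` decreasing from `+∞` to `0` on `(-π, 0)`. -/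
noncomputable def substWeight (v : ℝ) : ℝ := sin v ^ 2 / v ^ 2 - sin (2 * v) / v + 1

lemma mul_cos_le_sin {x : ℝ} (hx₀ : 0 ≤ x) (hx : x ≤ π) : x * cos x ≤ sin x := by
  rcases lt_or_ge x (π / 2) with hx₂ | hx₂
  · have hcos : 0 < cos x := cos_pos_of_mem_Ioo ⟨by linarith [pi_pos], hx₂⟩
    simpa [tan_eq_sin_div_cos, le_div_iff₀ hcos] using le_tan hx₀ hx₂
  · have hcos : cos x ≤ 0 := cos_nonpos_of_pi_div_two_le_of_le hx₂ (by linarith [pi_pos])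
    nlinarith [sin_nonneg_of_nonneg_of_le_pi hx₀ hx]

lemma one_le_div_sin {v : ℝ} (h₁ : -π < v) (h₂ : v < 0) : 1 ≤ v / sin v := by
  rw [le_div_iff_of_neg (sin_neg_of_neg_of_neg_pi_lt h₂ h₁), one_mul]
  exact (lt_sin h₂).le

lemma substAbscissa_nonneg {v : ℝ} (h₁ : -π < v) (h₂ : v < 0) : 0 ≤ substAbscissa v := by
  have hsin : sin v < 0 := sin_neg_of_neg_of_neg_pi_lt h₂ h₁
  have hcot : v * (cos v / sin v) ≤ 1 := by
    have := mul_cos_le_sin (x := -v) (by linarith) (by linarith)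
    rw [cos_neg, sin_neg] at this
    rw [← mul_div_assoc, div_le_one_of_neg hsin]
    linarith
  have hlog : 0 ≤ log (v / sin v) := log_nonneg (one_le_div_sin h₁ h₂)
  unfold substAbscissa
  linarith

lemma substWeight_eq (v : ℝ) : substWeight v = (sin v / v - cos v) ^ 2 + sin v ^ 2 := by
  have := sin_sq_add_cos_sq v
  rw [substWeight, sin_two_mul]
  linear_combination -this

lemma substWeight_nonneg (v : ℝ) : 0 ≤ substWeight v := by
  rw [substWeight_eq]
  positivity

lemma one_le_substWeight {v : ℝ} (hcos : cos v ≤ 0) (hsin : 0 ≤ sin v / v) :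
    1 ≤ substWeight v := by
  rw [substWeight_eq]
  nlinarith [sin_sq_add_cos_sq v, mul_nonneg (neg_nonneg.2 hcos) hsin, sq_nonneg (sin v / v)]

lemma cos_le_neg_one_half {v : ℝ} (h₁ : -π < v) (h₂ : v ≤ -3) : cos v ≤ -1 / 2 := by
  have := one_sub_sq_div_two_le_cos (x := v + π)
  rw [cos_add_pi] at this
  nlinarith [pi_lt_d2]

lemma inv_add_pi_le_neg_mul_cot {v : ℝ} (h₁ : -π < v) (h₂ : v ≤ -3) :
    (v + π)⁻¹ ≤ -(v * (cos v / sin v)) := by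
  have hsin : 0 < -sin v := neg_pos.2 (sin_neg_of_neg_of_neg_pi_lt (by linarith) h₁)
  have hsin_le : -sin v ≤ v + π := by simpa [sin_add_pi] using sin_le (x := v + π) (by linarith)
  have hvcos : 1 ≤ v * cos v := by nlinarith [cos_le_neg_one_half h₁ h₂]
  calc (v + π)⁻¹ ≤ (-sin v)⁻¹ := inv_anti₀ hsin hsin_le
    _ = 1 / -sin v := (one_div _).symm
    _ ≤ v * cos v / -sin v := div_le_div_of_nonneg_right hvcos hsin.le
    _ = -(v * (cos v / sin v)) := by rw [div_neg, mul_div_assoc]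

lemma inv_add_pi_le_substAbscissa_mul_substWeight {v : ℝ} (h₁ : -π < v) (h₂ : v ≤ -3) :
    (v + π)⁻¹ ≤ substAbscissa v * substWeight v := by
  have hv : v < 0 := by linarith
  have hx : (v + π)⁻¹ ≤ substAbscissa v := by
    have := log_nonneg (one_le_div_sin h₁ hv)
    have := inv_add_pi_le_neg_mul_cot h₁ h₂
    unfold substAbscissa
    linarith
  have hw : 1 ≤ substWeight v :=
    one_le_substWeight (by linarith [cos_le_neg_one_half h₁ h₂])
      (div_nonneg_of_nonpos (sin_neg_of_neg_of_neg_pi_lt hv h₁).le hv.le)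
  exact hx.trans (le_mul_of_one_le_right (substAbscissa_nonneg h₁ hv) hw)

lemma lintegral_Ioo_inv_sub_left_eq_top {a b : ℝ} (hab : a < b) :
    ∫⁻ x in Ioo a b, ENNReal.ofReal ((x - a)⁻¹) = ⊤ := by
  have hnot : ¬ IntervalIntegrable (fun x => (x - a)⁻¹) volume a b := by
    simp [hab.ne]
  rw [intervalIntegrable_iff_integrableOn_Ioo_of_le hab.le, IntegrableOn,
    ← lintegral_ofReal_ne_top_iff_integrable] at hnot
  · exact not_not.1 hnot
  · exact (measurable_id.sub_const a).inv.aestronglyMeasurable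
  · refine (ae_restrict_iff' measurableSet_Ioo).2 (.of_forall fun x hx => ?_)
    exact inv_nonneg.2 (sub_nonneg.2 hx.1.le)

/-- The function `v ↦ (1 − v·cot v + log(v/sin v))·(sin²v/v² − sin(2v)/v + 1)` is nonnegative
on `(−π, 0)` and its (Lebesgue) integral over `(−π, 0)` diverges to `+∞`; equivalently, after
the substitution `x = 1 − v·cot v + log(v/sin v)`, the density `g_∞` of the final jump time
has infinite mean: `∫_0^∞ x·g_∞(x) dx = ∞`. -/
theorem not_integrable_mean_substituted :
    (∀ v ∈ Set.Ioo (-Real.pi) 0,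
      0 ≤ (1 - v * (Real.cos v / Real.sin v) + Real.log (v / Real.sin v)) *
            (Real.sin v ^ 2 / v ^ 2 - Real.sin (2 * v) / v + 1)) ∧
    ∫⁻ v in Set.Ioo (-Real.pi) 0,
      ENNReal.ofReal ((1 - v * (Real.cos v / Real.sin v) + Real.log (v / Real.sin v)) *
            (Real.sin v ^ 2 / v ^ 2 - Real.sin (2 * v) / v + 1)) = ⊤ := by
  refine ⟨fun v hv => mul_nonneg (substAbscissa_nonneg hv.1 hv.2) (substWeight_nonneg v), ?_⟩
  change ∫⁻ v in Ioo (-π) 0, ENNReal.ofReal (substAbscissa v * substWeight v) = ⊤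
  have hπ : -π < -3 := by linarith [pi_gt_three]
  have hpole := lintegral_Ioo_inv_sub_left_eq_top hπ
  simp only [sub_neg_eq_add] at hpole
  rw [eq_top_iff, ← hpole]
  calc ∫⁻ v in Ioo (-π) (-3), ENNReal.ofReal ((v + π)⁻¹)
      ≤ ∫⁻ v in Ioo (-π) (-3), ENNReal.ofReal (substAbscissa v * substWeight v) :=
        setLIntegral_mono' measurableSet_Ioo fun v hv =>
          ENNReal.ofReal_le_ofReal (inv_add_pi_le_substAbscissa_mul_substWeight hv.1 hv.2.le)
    _ ≤ _ := lintegral_mono_set (Ioo_subset_Ioo_right (by norm_num))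
end

section
/- For every v ∈ (−π, 0), (v² − sin²v)·sin v + 2·v²·(sin v − v·cos v) < 0. (Equivalently, (3 − 2v·cot v)·v²/sin²v − 1 > 0 for all v ∈ (−π, 0); this is the inequality showing that the density f_J is strictly decreasing on (0, ∞).) -/
open Real

/-- For `x ≥ π/2` this is clear from `cos x ≤ 0 < sin x`; below `π/2` it is `x < tan x`. -/
theorem Real.mul_cos_lt_sin {x : ℝ} (h0 : 0 < x) (hx : x < π) : x * cos x < sin x := by
  rcases lt_or_ge x (π / 2) with hx2 | hx2
  · have hcos : 0 < cos x := cos_pos_of_mem_Ioo ⟨by linarith [pi_pos], hx2⟩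
    have htan : x < sin x / cos x := tan_eq_sin_div_cos x ▸ lt_tan h0 hx2
    exact (lt_div_iff₀ hcos).mp htan
  · have hcos : cos x ≤ 0 := cos_nonpos_of_pi_div_two_le_of_le hx2 (by linarith [pi_pos])
    exact (mul_nonpos_of_nonneg_of_nonpos h0.le hcos).trans_lt (sin_pos_of_pos_of_lt_pi h0 hx)

theorem Real.sq_sub_sin_sq_mul_sin_add_pos {u : ℝ} (h0 : 0 < u) (hu : u < π) :
    0 < (u ^ 2 - sin u ^ 2) * sin u + 2 * u ^ 2 * (sin u - u * cos u) := by
  have hsin : 0 < sin u := sin_pos_of_pos_of_lt_pi h0 hu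
  have hsq : 0 < u ^ 2 - sin u ^ 2 :=
    sub_pos.mpr (pow_lt_pow_left₀ (sin_lt h0) hsin.le two_ne_zero)
  have hsub : 0 < sin u - u * cos u := sub_pos.mpr (mul_cos_lt_sin h0 hu)
  positivity

/-- For every `v ∈ (−π, 0)`, `(v² − sin²v)·sin v + 2·v²·(sin v − v·cos v) < 0`;
equivalently `(3 − 2v·cot v)·v²/sin²v − 1 > 0` on `(−π, 0)`.  This is the trigonometric
inequality showing that the density `f_J` is strictly decreasing on `(0, ∞)`. -/
theorem trig_ineq_fJ_decreasing :
    ∀ v ∈ Set.Ioo (-Real.pi) 0,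
      (v ^ 2 - Real.sin v ^ 2) * Real.sin v +
        2 * v ^ 2 * (Real.sin v - v * Real.cos v) < 0 := by
  rintro v ⟨hlo, hhi⟩
  -- the left-hand side is odd in `v`
  have hpos := sq_sub_sin_sq_mul_sin_add_pos (neg_pos.mpr hhi) (neg_lt.mp hlo)
  simp only [sin_neg, cos_neg, neg_sq] at hpos
  linarith
end

section
/- As v → 0 from the left, (−v / ((1 − v·(cos v/sin v))² + v²)) · √(2·(1 − v·(cos v/sin v) + log(v / sin v))) → 1. (This expresses the asymptotic π·f_J(t) ∼ 1/√(2t) as t → 0+, under the parametrization t = x(v) = 1 − v·cot v + log(v/sin v), for which π·f_J(x(v)) = −v/((1 − v·cot v)² + v²).) -/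
open Filter Real Topology

/-!
Write `c v = 1 - v cot v` and `L v = log (v / sin v)`. The Taylor bounds for `sin` and `cos` give
`c v ~ v² / 3`, and `L v ~ v² / 6` because `log y` is squeezed between `1 - 1/y` and `y - 1`;
hence `x v = c v + L v ~ v² / 2`. For `v < 0` the expression equals
`√(2 x / v²) / ((c / v)² + 1)`, and `c / v → 0`, so the limit is `√1 / 1 = 1`.
-/

theorem tendsto_div_pow_of_abs_sub_le {f : ℝ → ℝ} {a C : ℝ} {n : ℕ}
    (h : ∀ᶠ v in 𝓝 0, |f v - a * v ^ n| ≤ C * |v| ^ (n + 1)) :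
    Tendsto (fun v => f v / v ^ n) (𝓝[≠] 0) (𝓝 a) := by
  rw [← tendsto_sub_nhds_zero_iff]
  refine squeeze_zero_norm' (a := fun v => C * |v|) ?_ ?_
  · filter_upwards [nhdsWithin_le_nhds h, self_mem_nhdsWithin] with v hv (hv0 : v ≠ 0)
    have hvn : (0 : ℝ) < |v| ^ n := pow_pos (abs_pos.2 hv0) n
    have hquot : f v / v ^ n - a = (f v - a * v ^ n) / v ^ n := by field_simp
    rw [Real.norm_eq_abs, hquot, abs_div, abs_pow, div_le_iff₀ hvn]
    calc |f v - a * v ^ n| ≤ C * |v| ^ (n + 1) := hv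
      _ = C * |v| * |v| ^ n := by ring
  · simpa using ((continuous_abs.tendsto (0 : ℝ)).const_mul C).mono_left nhdsWithin_le_nhds

theorem Filter.Tendsto.log_div_of_sub_one_div {α : Type*} {l : Filter α} {y w : α → ℝ}
    {a : ℝ} (hy : Tendsto y l (𝓝 1)) (hw : ∀ᶠ x in l, 0 < w x)
    (h : Tendsto (fun x => (y x - 1) / w x) l (𝓝 a)) :
    Tendsto (fun x => Real.log (y x) / w x) l (𝓝 a) := by
  have hlower : Tendsto (fun x => (y x - 1) / w x / y x) l (𝓝 a) := by
    rw [← div_one a]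
    exact h.div hy one_ne_zero
  refine tendsto_of_tendsto_of_tendsto_of_le_of_le' hlower h ?_ ?_
  · filter_upwards [hw, hy.eventually (lt_mem_nhds one_pos)] with x hwx hyx
    rw [div_right_comm]
    gcongr
    calc (y x - 1) / y x = 1 - (y x)⁻¹ := by field_simp
      _ ≤ Real.log (y x) := one_sub_inv_le_log_of_pos hyx
  · filter_upwards [hw, hy.eventually (lt_mem_nhds one_pos)] with x hwx hyx
    gcongr
    exact log_le_sub_one_of_pos hyx

theorem eventually_abs_le_one : ∀ᶠ v : ℝ in 𝓝 0, |v| ≤ 1 := by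
  filter_upwards [Metric.closedBall_mem_nhds (0 : ℝ) one_pos] with v hv
  simpa using hv

theorem tendsto_sub_sin_div_pow_three :
    Tendsto (fun v => (v - sin v) / v ^ 3) (𝓝[≠] 0) (𝓝 (1 / 6)) := by
  refine tendsto_div_pow_of_abs_sub_le (C := 1 / 100) ?_
  filter_upwards [eventually_abs_le_one] with v hv
  calc |v - sin v - 1 / 6 * v ^ 3| = |sin v - (v - v ^ 3 / 6)| := by
        rw [← abs_neg]; ring_nf
    _ ≤ |v| ^ 5 / 100 := sin_bound hv
    _ ≤ 1 / 100 * |v| ^ (3 + 1) := by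
        have : |v| ^ 5 ≤ |v| ^ 4 := pow_le_pow_of_le_one (abs_nonneg v) hv (by norm_num)
        linarith

theorem tendsto_sin_sub_mul_cos_div_pow_three :
    Tendsto (fun v => (sin v - v * cos v) / v ^ 3) (𝓝[≠] 0) (𝓝 (1 / 3)) := by
  refine tendsto_div_pow_of_abs_sub_le (C := 1 / 100 + 5 / 96) ?_
  filter_upwards [eventually_abs_le_one] with v hv
  have hv5 : |v| ^ 5 ≤ |v| ^ 4 := pow_le_pow_of_le_one (abs_nonneg v) hv (by norm_num)
  calc |sin v - v * cos v - 1 / 3 * v ^ 3|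
        = |(sin v - (v - v ^ 3 / 6)) - v * (cos v - (1 - v ^ 2 / 2))| := by ring_nf
    _ ≤ |sin v - (v - v ^ 3 / 6)| + |v| * |cos v - (1 - v ^ 2 / 2)| := by
        rw [← abs_mul]; exact abs_sub _ _
    _ ≤ |v| ^ 5 / 100 + |v| * (|v| ^ 4 * (5 / 96)) := by
        gcongr
        exacts [sin_bound hv, cos_bound hv]
    _ ≤ (1 / 100 + 5 / 96) * |v| ^ (3 + 1) := by nlinarith

theorem tendsto_sin_div_self : Tendsto (fun v => sin v / v) (𝓝[≠] 0) (𝓝 1) := by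
  have h : Tendsto sinc (𝓝[≠] 0) (𝓝 1) :=
    sinc_zero ▸ continuous_sinc.continuousAt.tendsto.mono_left nhdsWithin_le_nhds
  refine h.congr' ?_
  filter_upwards [self_mem_nhdsWithin] with v hv
  exact sinc_of_ne_zero hv

theorem tendsto_self_div_sin : Tendsto (fun v => v / sin v) (𝓝[≠] 0) (𝓝 1) := by
  simpa using tendsto_sin_div_self.inv₀ one_ne_zero

theorem eventually_sin_ne_zero : ∀ᶠ v in 𝓝[≠] (0 : ℝ), sin v ≠ 0 := by
  filter_upwards [tendsto_sin_div_self.eventually_ne one_ne_zero] with v hv hsin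
  simp [hsin] at hv

theorem tendsto_one_sub_mul_cot_div_sq :
    Tendsto (fun v => (1 - v * (cos v / sin v)) / v ^ 2) (𝓝[≠] 0) (𝓝 (1 / 3)) := by
  refine (by simpa using tendsto_sin_sub_mul_cos_div_pow_three.mul tendsto_self_div_sin :
    Tendsto (fun v => (sin v - v * cos v) / v ^ 3 * (v / sin v)) _ _).congr' ?_
  filter_upwards [self_mem_nhdsWithin, eventually_sin_ne_zero] with v hv hsin
  field_simp

theorem tendsto_log_self_div_sin_div_sq :
    Tendsto (fun v => log (v / sin v) / v ^ 2) (𝓝[≠] 0) (𝓝 (1 / 6)) := by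
  refine tendsto_self_div_sin.log_div_of_sub_one_div ?_ ?_
  · filter_upwards [self_mem_nhdsWithin] with v (hv : v ≠ 0)
    positivity
  · refine (by simpa using tendsto_sub_sin_div_pow_three.mul tendsto_self_div_sin :
      Tendsto (fun v => (v - sin v) / v ^ 3 * (v / sin v)) _ _).congr' ?_
    filter_upwards [self_mem_nhdsWithin, eventually_sin_ne_zero] with v hv hsin
    field_simp

theorem neg_div_sq_add_sq_mul_sqrt_eq {v : ℝ} (hv : v < 0) (c X : ℝ) :
    -v / (c ^ 2 + v ^ 2) * √(2 * X) = √(2 * (X / v ^ 2)) / ((v * (c / v ^ 2)) ^ 2 + 1) := by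
  rw [mul_div_assoc', Real.sqrt_div' _ (sq_nonneg v), Real.sqrt_sq_eq_abs, abs_of_neg hv]
  have hv0 : v ≠ 0 := hv.ne
  have : c ^ 2 + v ^ 2 ≠ 0 := by positivity
  field_simp

/-- As `v → 0⁻`,
`(−v/((1 − v·cot v)² + v²)) · √(2·(1 − v·cot v + log(v/sin v))) → 1`.
This expresses the asymptotic `π·f_J(t) ∼ 1/√(2t)` as `t → 0+` under the parametrization
`t = x(v) = 1 − v·cot v + log(v/sin v)`, for which `π·f_J(x(v)) = −v/((1 − v·cot v)² + v²)`. -/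
theorem tendsto_fJ_asymptotic :
    Tendsto
      (fun v : ℝ =>
        (-v / ((1 - v * (Real.cos v / Real.sin v)) ^ 2 + v ^ 2)) *
          Real.sqrt (2 * (1 - v * (Real.cos v / Real.sin v) + Real.log (v / Real.sin v))))
      (nhdsWithin 0 (Set.Iio 0)) (nhds 1) := by
  have hx : Tendsto (fun v => (1 - v * (cos v / sin v) + log (v / sin v)) / v ^ 2)
      (𝓝[≠] 0) (𝓝 (1 / 2)) := by
    convert tendsto_one_sub_mul_cot_div_sq.add tendsto_log_self_div_sin_div_sq using 2
    · rw [add_div]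
    · norm_num
  have hsqrt : Tendsto (fun v => √(2 * ((1 - v * (cos v / sin v) + log (v / sin v)) / v ^ 2)))
      (𝓝[≠] 0) (𝓝 1) := by
    simpa using (hx.const_mul 2).sqrt
  have hden : Tendsto (fun v => (v * ((1 - v * (cos v / sin v)) / v ^ 2)) ^ 2 + 1)
      (𝓝[≠] 0) (𝓝 1) := by
    have hv : Tendsto (fun v : ℝ => v) (𝓝[≠] 0) (𝓝 0) :=
      tendsto_nhdsWithin_of_tendsto_nhds tendsto_id
    simpa using ((hv.mul tendsto_one_sub_mul_cot_div_sq).pow 2).add_const 1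
  have hleft : 𝓝[<] (0 : ℝ) ≤ 𝓝[≠] 0 := nhdsWithin_mono _ fun _ hv => hv.ne
  have hlim := (hsqrt.div hden one_ne_zero).mono_left hleft
  rw [div_one] at hlim
  refine hlim.congr' ?_
  filter_upwards [self_mem_nhdsWithin] with v hv
  exact (neg_div_sq_add_sq_mul_sqrt_eq hv _ _).symm
end

section
/- The function x(v) := 1 − v·(cos v / sin v) + log(v / sin v) is strictly decreasing on the interval (−π, 0); moreover x(v) → 0 as v → 0⁻ and x(v) → +∞ as v → −π⁺. Consequently x is a (continuous, strictly decreasing) bijection from (−π, 0) onto (0, ∞). -/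
/-!
The derivative of `x = lambertSubst` is `((v - sin v cos v)² + sin⁴ v) / (v sin² v)`, which
is negative for `v ∈ (-π, 0)`. Writing `v / sin v = (sinc v)⁻¹` shows that `x` extends
continuously to `v = 0` with value `0`; as `v → -π⁺` we have `sin v → 0⁻`, so both `-v cot v`
and `log (v / sin v)` tend to `+∞`. A continuous strictly decreasing function on `(-π, 0)` with
these boundary limits maps it bijectively onto `(0, ∞)` by the intermediate value theorem.
-/

open Filter Real Set Topology

section IntervalBijection

variable {α δ : Type*} [ConditionallyCompleteLinearOrder α] [TopologicalSpace α]
  [OrderTopology α] [DenselyOrdered α] [LinearOrder δ] [TopologicalSpace δ] [OrderTopology δ]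
  {f : α → δ} {a b : α} {c : δ}

theorem StrictAntiOn.bijOn_Ioo_Ioi_of_tendsto (hab : a < b) (hf : StrictAntiOn f (Ioo a b))
    (hcont : ContinuousOn f (Ioo a b)) (hb : Tendsto f (𝓝[<] b) (𝓝 c))
    (ha : Tendsto f (𝓝[>] a) atTop) : BijOn f (Ioo a b) (Ioi c) := by
  have : NeBot (𝓝[>] a) := nhdsGT_neBot_of_exists_gt ⟨b, hab⟩
  have : NeBot (𝓝[<] b) := nhdsLT_neBot_of_exists_lt ⟨a, hab⟩
  refine ⟨fun x hx => ?_, hf.injOn, fun t ht => ?_⟩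
  · obtain ⟨y, hxy, hyb⟩ := exists_between hx.2
    have hy : y ∈ Ioo a b := ⟨hx.1.trans hxy, hyb⟩
    have hcy : c ≤ f y := le_of_tendsto hb <| mem_of_superset (Ioo_mem_nhdsLT hyb)
      fun z hz => (hf hy ⟨hy.1.trans hz.1, hz.2⟩ hz.1).le
    exact hcy.trans_lt (hf hx hy hxy)
  · obtain ⟨x₁, hx₁t, hx₁⟩ :=
      ((ha.eventually_ge_atTop t).and (Ioo_mem_nhdsGT hab)).exists
    obtain ⟨x₂, hx₂t, hx₂⟩ :=
      ((hb.eventually (eventually_lt_nhds ht)).and (Ioo_mem_nhdsLT hab)).exists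
    exact hcont.surjOn_uIcc hx₁ hx₂ (mem_uIcc.2 (Or.inr ⟨hx₂t.le, hx₁t⟩))

end IntervalBijection

noncomputable def lambertSubst (v : ℝ) : ℝ := 1 - v * (cos v / sin v) + log (v / sin v)

theorem hasDerivAt_lambertSubst {v : ℝ} (hv : v ≠ 0) (hsin : sin v ≠ 0) :
    HasDerivAt lambertSubst (((v - sin v * cos v) ^ 2 + sin v ^ 4) / (v * sin v ^ 2)) v := by
  have hcot := (hasDerivAt_cos v).div (hasDerivAt_sin v) hsin
  have hquot := (hasDerivAt_id v).div (hasDerivAt_sin v) hsin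
  refine (((hasDerivAt_const v 1).sub ((hasDerivAt_id v).mul hcot)).add
    (hquot.log (div_ne_zero hv hsin))).congr_deriv ?_
  simp only [Pi.div_apply, id_eq]
  field_simp
  linear_combination (v ^ 2 - sin v ^ 2) * sin_sq_add_cos_sq v

theorem continuousOn_lambertSubst : ContinuousOn lambertSubst (Ioo (-π) 0) := fun _ hv =>
  (hasDerivAt_lambertSubst hv.2.ne (sin_neg_of_neg_of_neg_pi_lt hv.2 hv.1).ne).continuousAt
    |>.continuousWithinAt

theorem strictAntiOn_lambertSubst : StrictAntiOn lambertSubst (Ioo (-π) 0) := by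
  refine strictAntiOn_of_deriv_neg (convex_Ioo _ _) continuousOn_lambertSubst fun v hv => ?_
  rw [interior_Ioo] at hv
  have hsin := (sin_neg_of_neg_of_neg_pi_lt hv.2 hv.1).ne
  rw [(hasDerivAt_lambertSubst hv.2.ne hsin).deriv]
  have hnum : 0 < (v - sin v * cos v) ^ 2 + sin v ^ 4 :=
    add_pos_of_nonneg_of_pos (sq_nonneg _) ((even_two_mul 2).pow_pos hsin)
  exact div_neg_of_pos_of_neg hnum (mul_neg_of_neg_of_pos hv.2 (even_two.pow_pos hsin))

theorem lambertSubst_eq_sinc {v : ℝ} (hv : v ≠ 0) :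
    lambertSubst v = 1 - cos v / sinc v - log (sinc v) := by
  rw [lambertSubst, sinc_of_ne_zero hv, ← inv_div v, log_inv]
  field_simp
  ring

theorem tendsto_lambertSubst_nhdsNE_zero : Tendsto lambertSubst (𝓝[≠] 0) (𝓝 0) := by
  have hcont : ContinuousAt (fun v => 1 - cos v / sinc v - log (sinc v)) 0 := by
    fun_prop (disch := simp [sinc_zero])
  have hlim : Tendsto (fun v => 1 - cos v / sinc v - log (sinc v)) (𝓝[≠] 0) (𝓝 0) := by
    simpa [sinc_zero] using hcont.tendsto.mono_left nhdsWithin_le_nhds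
  exact hlim.congr' <| eventually_nhdsWithin_of_forall fun _ hv => (lambertSubst_eq_sinc hv).symm

theorem tendsto_lambertSubst_nhdsLT_zero : Tendsto lambertSubst (𝓝[<] 0) (𝓝 0) :=
  tendsto_lambertSubst_nhdsNE_zero.mono_left (nhdsLT_le_nhdsNE 0)

theorem tendsto_inv_neg_sin_nhdsGT_neg_pi :
    Tendsto (fun v => (-sin v)⁻¹) (𝓝[>] (-π)) atTop := by
  refine tendsto_inv_nhdsGT_zero.comp (tendsto_nhdsWithin_iff.2 ⟨?_, ?_⟩)
  · exact (Continuous.tendsto' (by fun_prop) (-π) 0 (by simp)).mono_left nhdsWithin_le_nhds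
  · filter_upwards [Ioo_mem_nhdsGT (neg_neg_iff_pos.2 pi_pos)] with v hv
    exact neg_pos.2 (sin_neg_of_neg_of_neg_pi_lt hv.2 hv.1)

theorem tendsto_lambertSubst_nhdsGT_neg_pi : Tendsto lambertSubst (𝓝[>] (-π)) atTop := by
  have hvcos : Tendsto (fun v => v * cos v) (𝓝[>] (-π)) (𝓝 π) :=
    (Continuous.tendsto' (by fun_prop) (-π) π (by simp)).mono_left nhdsWithin_le_nhds
  have hneg : Tendsto (fun v : ℝ => -v) (𝓝[>] (-π)) (𝓝 π) :=
    (Continuous.tendsto' (by fun_prop) (-π) π (by simp)).mono_left nhdsWithin_le_nhds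
  have hcot := hvcos.pos_mul_atTop pi_pos tendsto_inv_neg_sin_nhdsGT_neg_pi
  have hquot := hneg.pos_mul_atTop pi_pos tendsto_inv_neg_sin_nhdsGT_neg_pi
  refine ((tendsto_atTop_add_const_left _ 1 hcot).atTop_add_atTop
    (tendsto_log_atTop.comp hquot)).congr fun v => ?_
  simp only [lambertSubst, Function.comp_apply, inv_neg, neg_mul_neg, div_eq_mul_inv]
  ring

/-- The function `x(v) = 1 − v·cot v + log(v/sin v)` is strictly decreasing on `(−π, 0)`,
tends to `0` as `v → 0⁻` and to `+∞` as `v → −π⁺`; consequently it is a bijection from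
`(−π, 0)` onto `(0, ∞)`.  This parametrizes the branch `W₋₁` of the Lambert function:
for each `t > 0` there is a unique `v ∈ (−π, 0)` with `W₋₁(−e^{−1+t}) = −v·cot v + iv`. -/
theorem substitution_x_strictAnti_bijective :
    StrictAntiOn
      (fun v : ℝ => 1 - v * (Real.cos v / Real.sin v) + Real.log (v / Real.sin v))
      (Set.Ioo (-Real.pi) 0) ∧
    Tendsto (fun v : ℝ => 1 - v * (Real.cos v / Real.sin v) + Real.log (v / Real.sin v))
      (nhdsWithin 0 (Set.Iio 0)) (nhds 0) ∧
    Tendsto (fun v : ℝ => 1 - v * (Real.cos v / Real.sin v) + Real.log (v / Real.sin v))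
      (nhdsWithin (-Real.pi) (Set.Ioi (-Real.pi))) atTop ∧
    Set.BijOn (fun v : ℝ => 1 - v * (Real.cos v / Real.sin v) + Real.log (v / Real.sin v))
      (Set.Ioo (-Real.pi) 0) (Set.Ioi 0) :=
  ⟨strictAntiOn_lambertSubst, tendsto_lambertSubst_nhdsLT_zero,
    tendsto_lambertSubst_nhdsGT_neg_pi,
    strictAntiOn_lambertSubst.bijOn_Ioo_Ioi_of_tendsto (neg_neg_iff_pos.2 pi_pos)
      continuousOn_lambertSubst tendsto_lambertSubst_nhdsLT_zero
      tendsto_lambertSubst_nhdsGT_neg_pi⟩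
end

section
/- Let w : ℝ → ℂ and t ∈ ℝ be such that w is differentiable at t, w(s)·exp(w(s)) = −exp(−1 + s) for all s in a neighbourhood of t, and w(t) ∉ {0, −1}. Then the function s ↦ s − (1 + w(s))² / w(s) has derivative 1 / w(t) at t. (This is the antiderivative identity ∫_0^t dx / W_{−1}(−e^{−1+x}) = t − (1 + W_{−1}(−e^{−1+t}))² / W_{−1}(−e^{−1+t}) used to compute the distribution function of the final jump time G_∞.) -/
/-!
Differentiating `w e^w = -e^{-1+s}` gives `w' (1 + w) e^w = -e^{-1+s} = w e^w`, so `w' (1 + w) = w`.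
Hence the derivative of `s - (1 + w)² / w` is `1 - (1 + w) w' (w - 1) / w² = 1 - (w - 1) / w = 1 / w`.
-/

open Complex Filter Topology

theorem mul_one_add_eq_of_hasDerivAt_of_mul_cexp_eventuallyEq {w g : ℝ → ℂ} {t : ℝ} {d : ℂ}
    (hw : HasDerivAt w d t) (hg : HasDerivAt g (g t) t)
    (heq : (fun s => w s * exp (w s)) =ᶠ[𝓝 t] g) : d * (1 + w t) = w t := by
  have hprod : HasDerivAt (fun s => w s * exp (w s)) (d * exp (w t) + w t * (exp (w t) * d)) t :=
    hw.mul hw.cexp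
  have hderiv : d * exp (w t) + w t * (exp (w t) * d) = w t * exp (w t) := by
    rw [hprod.unique (hg.congr_of_eventuallyEq heq)]
    exact heq.self_of_nhds.symm
  refine mul_right_cancel₀ (exp_ne_zero (w t)) ?_
  linear_combination hderiv

theorem hasDerivAt_neg_cexp_neg_one_add_ofReal (t : ℝ) :
    HasDerivAt (fun s : ℝ => -exp (-1 + (s : ℂ))) (-exp (-1 + (t : ℂ))) t := by
  have h : HasDerivAt (fun z : ℂ => -exp (-1 + z)) (-exp (-1 + (t : ℂ))) t := by
    simpa [Pi.neg_def] using ((hasDerivAt_id (t : ℂ)).const_add (-1)).cexp.neg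
  exact h.comp_ofReal

theorem hasDerivAt_ofReal_sub_one_add_sq_div {w : ℝ → ℂ} {t : ℝ} {d : ℂ}
    (hw : HasDerivAt w d t) (hd : d * (1 + w t) = w t) (h0 : w t ≠ 0) :
    HasDerivAt (fun s : ℝ => (s : ℂ) - (1 + w s) ^ 2 / w s) (1 / w t) t := by
  have hquot : HasDerivAt (fun s => (1 + w s) ^ 2 / w s)
      ((2 * (1 + w t) * d * w t - (1 + w t) ^ 2 * d) / w t ^ 2) t := by
    simpa using ((hw.const_add 1).fun_pow 2).fun_div hw h0
  have hid : HasDerivAt (fun s : ℝ => (s : ℂ)) 1 t := (hasDerivAt_id (t : ℂ)).comp_ofReal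
  refine (hid.fun_sub hquot).congr_deriv ?_
  field_simp
  linear_combination (1 - w t) * hd

theorem hasDerivAt_antiderivative_Ginfty_general (w : ℝ → ℂ) (t : ℝ)
    (hw : DifferentiableAt ℝ w t)
    (heq : ∀ᶠ s in nhds t, w s * Complex.exp (w s) = -Complex.exp (-1 + (s : ℂ)))
    (h0 : w t ≠ 0) :
    HasDerivAt (fun s : ℝ => (s : ℂ) - (1 + w s) ^ 2 / w s) (1 / w t) t :=
  hasDerivAt_ofReal_sub_one_add_sq_div hw.hasDerivAt
    (mul_one_add_eq_of_hasDerivAt_of_mul_cexp_eventuallyEq hw.hasDerivAt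
      (hasDerivAt_neg_cexp_neg_one_add_ofReal t) heq) h0

/-- If `w : ℝ → ℂ` is differentiable at `t`, satisfies the Lambert-function equation
`w(s)·e^{w(s)} = −e^{−1+s}` near `t`, and `w(t) ∉ {0, −1}`, then
`s ↦ s − (1 + w(s))²/w(s)` has derivative `1/w(t)` at `t`.  This is the antiderivative
identity `∫_0^t dx/W₋₁(−e^{−1+x}) = t − (1 + W₋₁(−e^{−1+t}))²/W₋₁(−e^{−1+t})` used to
compute the distribution function of the final jump time `G_∞`. -/
theorem hasDerivAt_antiderivative_Ginfty (w : ℝ → ℂ) (t : ℝ)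
    (hw : DifferentiableAt ℝ w t)
    (heq : ∀ᶠ s in nhds t, w s * Complex.exp (w s) = -Complex.exp (-1 + (s : ℂ)))
    (h0 : w t ≠ 0) (h1 : w t ≠ -1) :
    HasDerivAt (fun s : ℝ => (s : ℂ) - (1 + w s) ^ 2 / w s) (1 / w t) t :=
  hasDerivAt_antiderivative_Ginfty_general w t hw heq h0
end

section
/- Let a, b : (0, ∞) → ℝ satisfy 0 < a(t) < 1 < b(t) and a(t)·e^{−a(t)} = e^{−1−t} = b(t)·e^{−b(t)} for all t > 0. Then the function c(t) := b(t)/(b(t) − 1) + a(t)/(1 − a(t)) tends to 1 as t → ∞. -/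
open Filter Topology Real

/-! For `t > 0` the equation `y e^{-y} = e^{-1-t}` forces `b(t) ≥ 1 + t`, since `e^{-b} < b e^{-b}`,
and `a(t) ≤ e^{-t}`, since `a = e^{-1-t} e^{a} ≤ e^{-t}`. Hence `b → ∞` and `a → 0`, so
`b/(b-1) → 1` and `a/(1-a) → 0`. -/

lemma le_of_one_le_of_mul_exp_neg_eq {y s : ℝ} (hy : 1 ≤ y) (h : y * exp (-y) = exp (-s)) :
    s ≤ y := by
  have : exp (-y) ≤ exp (-s) := h ▸ le_mul_of_one_le_left (exp_pos _).le hy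
  linarith [exp_le_exp.mp this]

lemma le_exp_of_le_one_of_mul_exp_neg_eq {y s : ℝ} (hy : y ≤ 1) (h : y * exp (-y) = exp (-s)) :
    y ≤ exp (1 - s) := by
  calc y = exp (-s) * exp y := by rw [← h, mul_assoc, ← exp_add, neg_add_cancel, exp_zero, mul_one]
    _ ≤ exp (-s) * exp 1 := by gcongr
    _ = exp (1 - s) := by rw [← exp_add]; ring_nf

lemma tendsto_div_sub_one_of_tendsto_atTop {α : Type*} {l : Filter α} {f : α → ℝ}
    (hf : Tendsto f l atTop) : Tendsto (fun x => f x / (f x - 1)) l (𝓝 1) := by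
  have h : Tendsto (fun x => 1 + (f x - 1)⁻¹) l (𝓝 (1 + 0)) :=
    tendsto_const_nhds.add (tendsto_inv_atTop_zero.comp (tendsto_atTop_add_const_right _ (-1) hf))
  rw [add_zero] at h
  refine h.congr' ?_
  filter_upwards [hf.eventually_gt_atTop 1] with x hx
  field_simp [(sub_pos.mpr hx).ne']
  ring

lemma tendsto_div_one_sub_of_tendsto_zero {α : Type*} {l : Filter α} {f : α → ℝ}
    (hf : Tendsto f l (𝓝 0)) : Tendsto (fun x => f x / (1 - f x)) l (𝓝 0) := by
  simpa [Pi.div_def] using hf.div (tendsto_const_nhds.sub hf) (by norm_num)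

/-- If `a, b : (0, ∞) → ℝ` satisfy `0 < a(t) < 1 < b(t)` and
`a(t)·e^{−a(t)} = e^{−1−t} = b(t)·e^{−b(t)}` for all `t > 0`, then
`c(t) := b(t)/(b(t) − 1) + a(t)/(1 − a(t)) → 1` as `t → ∞`. -/
theorem tendsto_c_one (a b : ℝ → ℝ)
    (ha : ∀ t : ℝ, 0 < t → 0 < a t ∧ a t < 1)
    (hb : ∀ t : ℝ, 0 < t → 1 < b t)
    (heqa : ∀ t : ℝ, 0 < t → a t * Real.exp (-a t) = Real.exp (-1 - t))
    (heqb : ∀ t : ℝ, 0 < t → b t * Real.exp (-b t) = Real.exp (-1 - t)) :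
    Tendsto (fun t : ℝ => b t / (b t - 1) + a t / (1 - a t)) atTop (nhds 1) := by
  have hb_top : Tendsto b atTop atTop := by
    refine tendsto_atTop_mono' _ ?_ (tendsto_atTop_add_const_left _ 1 (f := fun t => t) tendsto_id)
    filter_upwards [eventually_gt_atTop 0] with t ht
    refine le_of_one_le_of_mul_exp_neg_eq (hb t ht).le ?_
    rw [heqb t ht, neg_add']
  have ha_zero : Tendsto a atTop (𝓝 0) := by
    refine squeeze_zero' ?_ ?_ tendsto_exp_neg_atTop_nhds_zero
    · filter_upwards [eventually_gt_atTop 0] with t ht using (ha t ht).1.le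
    · filter_upwards [eventually_gt_atTop 0] with t ht
      have h := le_exp_of_le_one_of_mul_exp_neg_eq (s := 1 + t) (ha t ht).2.le
        (by rw [heqa t ht, neg_add'])
      rwa [sub_add_cancel_left] at h
  simpa using (tendsto_div_sub_one_of_tendsto_atTop hb_top).add
    (tendsto_div_one_sub_of_tendsto_zero ha_zero)
end

section
/- Let m : ℕ → ℝ → ℝ be a family of continuous functions such that m_0(t) = 1 for all t ≥ 0 and, for every n ≥ 1 and t ≥ 0, m_n(t) − m_{n−1}(t) = n·∫_0^t m_{n−1}(s) ds. Then for all n ≥ 0 and t ≥ 0, m_n(t) = ∑_{k=0}^{n} e_k(1, 2, …, n) · t^k / k!, where e_k(1, …, n) = ∑_{1 ≤ j_1 < ⋯ < j_k ≤ n} j_1 ⋯ j_k is the k-th elementary symmetric polynomial of 1, 2, …, n (with e_0 = 1). -/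
/-!
The recursion `m_{n+1}(t) = m_n(t) + (n+1) ∫_0^t m_n` determines every `m_n` on `[0, ∞)` from
`m_0`, so it suffices to check that the polynomials `∑_k e_k(1,…,n) t^k/k!` satisfy it.
Integration shifts `t^k/k!` to `t^(k+1)/(k+1)!`, and the coefficients match by the Pascal-type
rule `e_{k+1}(1,…,n+1) = e_{k+1}(1,…,n) + (n+1) e_k(1,…,n)`.
-/

open Finset
open scoped Nat

namespace Multiset

variable {R : Type*} [CommSemiring R]

theorem esymm_zero (s : Multiset R) : s.esymm 0 = 1 := by
  simp [esymm, powersetCard_zero_left]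

theorem esymm_eq_zero_of_card_lt {s : Multiset R} {k : ℕ} (h : card s < k) : s.esymm k = 0 := by
  simp [esymm, powersetCard_eq_empty k h]

theorem esymm_cons_succ (a : R) (s : Multiset R) (k : ℕ) :
    (a ::ₘ s).esymm (k + 1) = s.esymm (k + 1) + a * s.esymm k := by
  simp [esymm, powersetCard_cons, map_map, sum_map_mul_left]

end Multiset

theorem integral_pow_div_factorial (t : ℝ) (k : ℕ) :
    ∫ s in (0 : ℝ)..t, s ^ k / k ! = t ^ (k + 1) / (k + 1)! := by
  rw [intervalIntegral.integral_div, integral_pow, Nat.factorial_succ]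
  push_cast
  field_simp
  ring

noncomputable def firstNaturals (n : ℕ) : Multiset ℝ := (Icc 1 n).val.map (Nat.cast : ℕ → ℝ)

theorem firstNaturals_succ (n : ℕ) :
    firstNaturals (n + 1) = ((n + 1 : ℕ) : ℝ) ::ₘ firstNaturals n := by
  rw [firstNaturals, ← insert_Icc_right_eq_Icc_add_one (by omega),
    insert_val_of_notMem (by simp), Multiset.map_cons, firstNaturals]

theorem card_firstNaturals (n : ℕ) : Multiset.card (firstNaturals n) = n := by
  simp [firstNaturals]

noncomputable def momentPoly (n : ℕ) (t : ℝ) : ℝ :=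
  ∑ k ∈ range (n + 1), (firstNaturals n).esymm k * (t ^ k / k !)

theorem momentPoly_zero (t : ℝ) : momentPoly 0 t = 1 := by
  simp [momentPoly, Multiset.esymm_zero]

theorem momentPoly_succ (n : ℕ) (t : ℝ) :
    momentPoly (n + 1) t = momentPoly n t + (n + 1) * ∫ s in (0 : ℝ)..t, momentPoly n s := by
  have hint : ∫ s in (0 : ℝ)..t, momentPoly n s
      = ∑ k ∈ range (n + 1), (firstNaturals n).esymm k * (t ^ (k + 1) / (k + 1)!) := by
    simp_rw [momentPoly]
    rw [intervalIntegral.integral_finsetSum fun k _ =>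
      (by fun_prop : Continuous _).intervalIntegrable _ _]
    simp_rw [intervalIntegral.integral_const_mul, integral_pow_div_factorial]
  have hreindex : ∑ k ∈ range (n + 1), (firstNaturals n).esymm (k + 1) * (t ^ (k + 1) / (k + 1)!)
      + t ^ 0 / (0 : ℕ)! = ∑ k ∈ range (n + 1), (firstNaturals n).esymm k * (t ^ k / k !) := by
    rw [sum_range_succ, Multiset.esymm_eq_zero_of_card_lt (by rw [card_firstNaturals]; omega),
      sum_range_succ' _ n, Multiset.esymm_zero]
    ring
  rw [hint, momentPoly, momentPoly, ← hreindex]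
  simp only [firstNaturals_succ]
  rw [sum_range_succ' _ (n + 1)]
  simp only [Multiset.esymm_cons_succ, Multiset.esymm_zero, Nat.cast_succ, add_mul, mul_assoc,
    sum_add_distrib, mul_sum]
  ring

theorem eqOn_of_integral_recursion {m m' : ℕ → ℝ → ℝ}
    (h0 : ∀ t : ℝ, 0 ≤ t → m 0 t = m' 0 t)
    (hrec : ∀ n : ℕ, ∀ t : ℝ, 0 ≤ t →
      m (n + 1) t = m n t + (n + 1) * ∫ s in (0 : ℝ)..t, m n s)
    (hrec' : ∀ n : ℕ, ∀ t : ℝ, 0 ≤ t →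
      m' (n + 1) t = m' n t + (n + 1) * ∫ s in (0 : ℝ)..t, m' n s) :
    ∀ n : ℕ, ∀ t : ℝ, 0 ≤ t → m n t = m' n t := by
  intro n
  induction n with
  | zero => exact h0
  | succ n ih =>
    intro t ht
    have hint : ∫ s in (0 : ℝ)..t, m n s = ∫ s in (0 : ℝ)..t, m' n s :=
      intervalIntegral.integral_congr fun s hs => ih s (by rw [Set.uIcc_of_le ht] at hs; exact hs.1)
    rw [hrec n t ht, hrec' n t ht, ih t ht, hint]

theorem moments_monotone_poisson_general (m : ℕ → ℝ → ℝ)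
    (h0 : ∀ t : ℝ, 0 ≤ t → m 0 t = 1)
    (hrec : ∀ n : ℕ, 1 ≤ n → ∀ t : ℝ, 0 ≤ t →
      m n t - m (n - 1) t = n * ∫ s in (0:ℝ)..t, m (n - 1) s) :
    ∀ n : ℕ, ∀ t : ℝ, 0 ≤ t →
      m n t = ∑ k ∈ Finset.range (n + 1),
        (∑ A ∈ Finset.powersetCard k (Finset.Icc 1 n), ∏ j ∈ A, (j : ℝ)) *
          t ^ k / (Nat.factorial k) := by
  have hrec_succ (n : ℕ) (t : ℝ) (ht : 0 ≤ t) :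
      m (n + 1) t = m n t + (n + 1) * ∫ s in (0 : ℝ)..t, m n s := by
    have := hrec (n + 1) (by omega) t ht
    push_cast at this
    linarith
  intro n t ht
  rw [eqOn_of_integral_recursion (m' := momentPoly)
    (fun t ht => (h0 t ht).trans (momentPoly_zero t).symm) hrec_succ
    (fun n t _ => momentPoly_succ n t) n t ht, momentPoly]
  simp only [firstNaturals, Finset.esymm_map_val, mul_div_assoc]

/-- If `m : ℕ → ℝ → ℝ` is a family of continuous functions with `m_0 ≡ 1` on `[0, ∞)` and
`m_n(t) − m_{n−1}(t) = n·∫_0^t m_{n−1}(s) ds` for `n ≥ 1`, `t ≥ 0`, then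
`m_n(t) = ∑_{k=0}^n e_k(1, …, n)·t^k/k!`, where `e_k(1, …, n)` is the `k`-th elementary
symmetric polynomial of `1, 2, …, n`.  (These are the moments `m_n(t) = E[(Z_t + t)^n]` of
the monotone Poisson process started at `1`.) -/
theorem moments_monotone_poisson (m : ℕ → ℝ → ℝ)
    (hcont : ∀ n, Continuous (m n))
    (h0 : ∀ t : ℝ, 0 ≤ t → m 0 t = 1)
    (hrec : ∀ n : ℕ, 1 ≤ n → ∀ t : ℝ, 0 ≤ t →
      m n t - m (n - 1) t = n * ∫ s in (0:ℝ)..t, m (n - 1) s) :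
    ∀ n : ℕ, ∀ t : ℝ, 0 ≤ t →
      m n t = ∑ k ∈ Finset.range (n + 1),
        (∑ A ∈ Finset.powersetCard k (Finset.Icc 1 n), ∏ j ∈ A, (j : ℝ)) *
          t ^ k / (Nat.factorial k) :=
  moments_monotone_poisson_general m h0 hrec
end
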